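/- In the polynomial representation P_κ of the double affine Hecke algebra, for every Θ ∈ Ḧ_κ one has [Θ·T₁⋯T_{κ−1}·Y_κ] = [Θ·T_{κ−1}⋯T₁·Y₁⁻¹] = [Θ]; consequently the assignment sending a braid from q to α on T² to its class in P_κ (obtained by isotoping its endpoints back to q within α) is invariant under sliding an endpoint once around α. -/
import Mathlib


/-!
# Statement 18 (from the proof of Proposition 4.1)

In the polynomial representation `P_κ` of the double affine Hecke algebra, for
every `Θ ∈ Ḧ_κ` one has
`[Θ·T₁⋯T_{κ−1}·Y_κ] = [Θ·T_{κ−1}⋯T₁·Y₁⁻¹] = [Θ]`; consequently the assignment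
sending a braid from `q` to `α` on `T²` to its class in `P_κ` (obtained by
isotoping its endpoints back to `q` within `α`) is invariant under sliding an
endpoint once around `α`.

Here (`κ = n + 1`, over `R = Z[s^{±1}, c^{±1}]`, abstracted as a commutative
ring with a distinguished unit `s`):
* `D` is the double affine Hecke algebra `Ḧ_κ` with generators `T i` (the `T_i`,
  zero-based) and invertible `Y i` (the `Y_i`, zero-based, so `Y₁ = Y 0` and
  `Y_κ = Y (Fin.last n)`);
* `P_κ = D / polyRelations` where `polyRelations` is spanned by
  (A1) `Θ·T_i − s·Θ` and (A2) `Θ·Y_i − s^{κ+1−2i}·Θ` (zero-based exponent `n − 2i`);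
* the braid-theoretic consequence is expressed for any set `Br` of braids from
  `q` to `α` with a word map `word : Br → Ḧ_κ` and an endpoint-sliding operation
  `slide` whose effect on words is right multiplication by `T₁⋯T_{κ−1}·Y_κ`.
-/

/-- The `R`-submodule of `Ḧ_κ` spanned by the induction relations (A1), (A2)
defining the polynomial representation. -/
def polyRelations (n : ℕ) (R : Type) [CommRing R] (s : Rˣ)
    (D : Type) [Ring D] [Algebra R D]
    (T : Fin n → D) (Y : Fin (n + 1) → Dˣ) : Submodule R D :=
  Submodule.span R
    ({y | ∃ (Θ : D) (i : Fin n), y = Θ * T i - (s : R) • Θ} ∪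
     {y | ∃ (Θ : D) (i : Fin (n + 1)),
        y = Θ * ((Y i : Dˣ) : D) - ((s ^ ((n : ℤ) - 2 * (i : ℤ))) : Rˣ) • Θ})

theorem slide_relation_in_polynomial_representation
    (n : ℕ) (R : Type) [CommRing R] (s : Rˣ)
    (D : Type) [Ring D] [Algebra R D]
    (T : Fin n → D) (Y : Fin (n + 1) → Dˣ) :
    -- `[Θ·T₁⋯T_{κ−1}·Y_κ] = [Θ]` and `[Θ·T_{κ−1}⋯T₁·Y₁⁻¹] = [Θ]` in `P_κ`:
    (∀ Θ : D,
      (polyRelations n R s D T Y).mkQ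
          (Θ * (List.ofFn fun i : Fin n => T i).prod * ((Y (Fin.last n) : Dˣ) : D)) =
        (polyRelations n R s D T Y).mkQ Θ ∧
      (polyRelations n R s D T Y).mkQ
          (Θ * ((List.ofFn fun i : Fin n => T i).reverse).prod * (((Y 0)⁻¹ : Dˣ) : D)) =
        (polyRelations n R s D T Y).mkQ Θ) ∧
    -- consequently, the class in `P_κ` of a braid is invariant under sliding an
    -- endpoint once around `α`:
    (∀ (Br : Type) (word : Br → D) (slide : Br → Br),
      (∀ b : Br, word (slide b) =
        word b * (List.ofFn fun i : Fin n => T i).prod * ((Y (Fin.last n) : Dˣ) : D)) →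
      ∀ b : Br,
        (polyRelations n R s D T Y).mkQ (word (slide b)) =
          (polyRelations n R s D T Y).mkQ (word b)) := by
  set N := polyRelations n R s D T Y with hNdef
  -- generator membership
  have memT : ∀ (Θ : D) (i : Fin n), Θ * T i - (s : R) • Θ ∈ N :=
    fun Θ i => Submodule.subset_span (Or.inl ⟨Θ, i, rfl⟩)
  have memY : ∀ (Θ : D) (i : Fin (n + 1)),
      Θ * ((Y i : Dˣ) : D) - ((s ^ ((n : ℤ) - 2 * (i : ℤ))) : Rˣ) • Θ ∈ N :=
    fun Θ i => Submodule.subset_span (Or.inr ⟨Θ, i, rfl⟩)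
  -- quotient relations, with `Rˣ`-scalars
  have hT : ∀ (Θ : D) (i : Fin n), N.mkQ (Θ * T i) = s • N.mkQ Θ := by
    intro Θ i
    have h : N.mkQ (Θ * T i) = N.mkQ ((s : R) • Θ) :=
      (Submodule.Quotient.eq N).mpr (memT Θ i)
    rw [h, map_smul, Units.smul_def]
  have hY : ∀ (Θ : D) (i : Fin (n + 1)),
      N.mkQ (Θ * ((Y i : Dˣ) : D)) = (s ^ ((n : ℤ) - 2 * (i : ℤ))) • N.mkQ Θ := by
    intro Θ i
    have h : N.mkQ (Θ * ((Y i : Dˣ) : D)) =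
        N.mkQ (((s ^ ((n : ℤ) - 2 * (i : ℤ))) : Rˣ) • Θ) :=
      (Submodule.Quotient.eq N).mpr (memY Θ i)
    rw [h, Units.smul_def, map_smul, Units.smul_def]
  -- product of T's over any index list
  have hprod : ∀ (l : List (Fin n)) (Θ : D),
      N.mkQ (Θ * (l.map T).prod) = (s ^ l.length) • N.mkQ Θ := by
    intro l
    induction l with
    | nil => intro Θ; simp
    | cons i l ih =>
      intro Θ
      have h : Θ * ((i :: l).map T).prod = (Θ * T i) * (l.map T).prod := by
        simp [mul_assoc]
      rw [h, ih, hT, List.length_cons, smul_smul, pow_succ]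
  have hofn : (List.ofFn fun i : Fin n => T i) = (List.finRange n).map T := by
    simp [List.ofFn_eq_map]
  have hprodFull : ∀ Θ : D,
      N.mkQ (Θ * (List.ofFn fun i : Fin n => T i).prod) = (s ^ n) • N.mkQ Θ := by
    intro Θ
    rw [hofn, hprod]
    simp
  have hprodRev : ∀ Θ : D,
      N.mkQ (Θ * ((List.ofFn fun i : Fin n => T i).reverse).prod) = (s ^ n) • N.mkQ Θ := by
    intro Θ
    rw [hofn, ← List.map_reverse, hprod]
    simp
  have hlast : ((n : ℤ) - 2 * ((Fin.last n : Fin (n + 1)) : ℤ)) = -(n : ℤ) := by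
    simp [Fin.val_last]; ring
  have main : ∀ Θ : D,
      N.mkQ (Θ * (List.ofFn fun i : Fin n => T i).prod * ((Y (Fin.last n) : Dˣ) : D)) =
        N.mkQ Θ ∧
      N.mkQ (Θ * ((List.ofFn fun i : Fin n => T i).reverse).prod * (((Y 0)⁻¹ : Dˣ) : D)) =
        N.mkQ Θ := by
    intro Θ
    constructor
    · rw [hY, hprodFull, hlast, smul_smul, zpow_neg, zpow_natCast]
      simp
    · set Θ' := Θ * ((List.ofFn fun i : Fin n => T i).reverse).prod * (((Y 0)⁻¹ : Dˣ) : D)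
        with hΘ'
      have h0 : Θ' * ((Y 0 : Dˣ) : D) =
          Θ * ((List.ofFn fun i : Fin n => T i).reverse).prod := by
        rw [hΘ', mul_assoc, Units.inv_mul, mul_one]
      have h1 := hY Θ' 0
      rw [h0, hprodRev] at h1
      have h2 : ((n : ℤ) - 2 * ((0 : Fin (n + 1)) : ℤ)) = (n : ℤ) := by
        simp
      rw [h2, zpow_natCast] at h1
      have := smul_left_cancel (s ^ n) h1
      exact this.symm
  refine ⟨main, ?_⟩
  intro Br word slide hw b
  rw [hw b]
  exact (main (word b)).1
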